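/- arXiv:2201.13122 — 4 statements merged into one kernel-verified Lean document; each statement's English description precedes it below -/
import Mathlib

section
/- Let β* ∈ (0,∞) be such that i(β) > 0 for 0 < β < β* and i(β) < 0 for β > β*. Then the fibering map j is strictly increasing on (0, β*], strictly decreasing on [β*, ∞); consequently j attains its maximum over (0,∞) at β = β*, and j(β*) > 0. -/
/-!
Differentiating the fibering map gives `j'(β) = i(β) / β`, so `j` increases exactly where `i` is
positive and decreases where `i` is negative; this yields the monotonicity and the maximum at `β*`.
For the sign of the maximum, the identity
`j(β) = i(β) / (p + 1) + (1/2 - 1/(p + 1)) A β² + C β^(p+1) / (p + 1)²`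
shows `j(β) > 0` wherever `i(β) ≥ 0`, e.g. at `β = β*/2`, and `j(β*) > j(β*/2)`.
-/

open Set Real

theorem strictMonoOn_Ioc_of_hasDerivAt_pos {f f' : ℝ → ℝ} {a b : ℝ}
    (hf : ∀ x ∈ Ioc a b, HasDerivAt f (f' x) x) (hf' : ∀ x ∈ Ioo a b, 0 < f' x) :
    StrictMonoOn f (Ioc a b) :=
  strictMonoOn_of_hasDerivWithinAt_pos (convex_Ioc a b)
    (fun x hx => (hf x hx).continuousAt.continuousWithinAt)
    (fun x hx => by
      rw [interior_Ioc] at hx ⊢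
      exact (hf x (Ioo_subset_Ioc_self hx)).hasDerivWithinAt)
    (by rwa [interior_Ioc])

theorem strictAntiOn_Ici_of_hasDerivAt_neg {f f' : ℝ → ℝ} {b : ℝ}
    (hf : ∀ x ∈ Ici b, HasDerivAt f (f' x) x) (hf' : ∀ x ∈ Ioi b, f' x < 0) :
    StrictAntiOn f (Ici b) :=
  strictAntiOn_of_hasDerivWithinAt_neg (convex_Ici b)
    (fun x hx => (hf x hx).continuousAt.continuousWithinAt)
    (fun x hx => by
      rw [interior_Ici] at hx ⊢
      exact (hf x (Ioi_subset_Ici_self hx)).hasDerivWithinAt)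
    (by rwa [interior_Ici])

section Fibering

variable (p A B C : ℝ)

noncomputable def potentialFiber (β : ℝ) : ℝ :=
  A / 2 * β ^ 2 - β ^ (p + 1) / (p + 1) * (B + C * log β) + C / (p + 1) ^ 2 * β ^ (p + 1)

noncomputable def nehariFiber (β : ℝ) : ℝ :=
  A * β ^ 2 - β ^ (p + 1) * (B + C * log β)

variable {p A B C}

theorem hasDerivAt_potentialFiber (hp : p + 1 ≠ 0) {β : ℝ} (hβ : 0 < β) :
    HasDerivAt (potentialFiber p A B C) (nehariFiber p A B C β / β) β := by
  have hpow : HasDerivAt (fun x : ℝ => x ^ (p + 1)) ((p + 1) * β ^ p) β := by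
    simpa using hasDerivAt_rpow_const (x := β) (p := p + 1) (Or.inl hβ.ne')
  have hlog : HasDerivAt (fun x => B + C * log x) (C * β⁻¹) β :=
    ((hasDerivAt_log hβ.ne').const_mul C).const_add B
  refine ((((hasDerivAt_pow 2 β).const_mul (A / 2)).sub ((hpow.div_const (p + 1)).mul hlog)).add
    (hpow.const_mul (C / (p + 1) ^ 2))).congr_deriv ?_
  rw [nehariFiber, rpow_add hβ, rpow_one]
  field_simp
  ring

theorem potentialFiber_eq (hp : p + 1 ≠ 0) (β : ℝ) :
    potentialFiber p A B C β = nehariFiber p A B C β / (p + 1)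
      + (1 / 2 - 1 / (p + 1)) * A * β ^ 2 + C / (p + 1) ^ 2 * β ^ (p + 1) := by
  rw [potentialFiber, nehariFiber]
  field_simp
  ring

theorem potentialFiber_pos_of_nehariFiber_nonneg (hp : 1 < p) (hA : 0 < A) (hC : 0 ≤ C)
    {β : ℝ} (hβ : 0 < β) (hi : 0 ≤ nehariFiber p A B C β) : 0 < potentialFiber p A B C β := by
  have hp1 : 0 < p + 1 := by linarith
  have hcoeff : 0 < 1 / 2 - 1 / (p + 1) := by
    rw [sub_pos]
    exact one_div_lt_one_div_of_lt two_pos (by linarith)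
  rw [potentialFiber_eq hp1.ne']
  exact add_pos_of_pos_of_nonneg (add_pos_of_nonneg_of_pos (by positivity) (by positivity))
    (by positivity)

end Fibering

/-- If `β* > 0` is such that `i(β) > 0` on `(0, β*)` and `i(β) < 0` on `(β*, ∞)`,
then `j` is strictly increasing on `(0, β*]`, strictly decreasing on `[β*, ∞)`, attains
its maximum over `(0,∞)` at `β*`, and `j(β*) > 0`. -/
theorem stmt_3 (p A B C : ℝ) (hp : 1 < p) (hA : 0 < A) (hC : 0 < C)
    (j i : ℝ → ℝ)
    (hj : ∀ β : ℝ, 0 < β →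
      j β = A / 2 * β ^ 2 - β ^ (p + 1) / (p + 1) * (B + C * Real.log β)
              + C / (p + 1) ^ 2 * β ^ (p + 1))
    (hi : ∀ β : ℝ, 0 < β →
      i β = A * β ^ 2 - β ^ (p + 1) * (B + C * Real.log β))
    (βs : ℝ) (hβs : 0 < βs)
    (hpos : ∀ β : ℝ, 0 < β → β < βs → 0 < i β)
    (hneg : ∀ β : ℝ, βs < β → i β < 0) :
    StrictMonoOn j (Set.Ioc 0 βs) ∧ StrictAntiOn j (Set.Ici βs) ∧
      (∀ β : ℝ, 0 < β → j β ≤ j βs) ∧ 0 < j βs := by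
  have hderiv (β : ℝ) (hβ : 0 < β) : HasDerivAt j (i β / β) β := by
    rw [hi β hβ]
    exact (hasDerivAt_potentialFiber (by linarith) hβ).congr_of_eventuallyEq
      (Filter.eventually_of_mem (Ioi_mem_nhds hβ) hj)
  have hmono : StrictMonoOn j (Ioc 0 βs) :=
    strictMonoOn_Ioc_of_hasDerivAt_pos (fun β hβ => hderiv β hβ.1)
      (fun β hβ => div_pos (hpos β hβ.1 hβ.2) hβ.1)
  have hanti : StrictAntiOn j (Ici βs) :=
    strictAntiOn_Ici_of_hasDerivAt_neg (fun β hβ => hderiv β (hβs.trans_le hβ))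
      (fun β hβ => div_neg_of_neg_of_pos (hneg β hβ) (hβs.trans hβ))
  have hhalf : 0 < j (βs / 2) := by
    have h0 := half_pos hβs
    rw [hj _ h0]
    have hi0 := hpos _ h0 (half_lt_self hβs)
    rw [hi _ h0] at hi0
    exact potentialFiber_pos_of_nehariFiber_nonneg hp hA hC.le h0 hi0.le
  refine ⟨hmono, hanti, fun β hβ => isMaxOn_Ioi_of_mono_anti hmono.monotoneOn hanti.antitoneOn hβ,
    hhalf.trans (hmono ⟨half_pos hβs, (half_lt_self hβs).le⟩ ⟨hβs, le_rfl⟩ (half_lt_self hβs))⟩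
end

section
/- Let (X, μ) be a measure space with μ(X) < ∞, let p > 1 be real, and set γ = (2p+2)/(2p+1). Let f : X → ℝ be measurable with x ↦ |f(x)|^(p+1) integrable. Then the function x ↦ (|f(x)|^p·|log|f(x)||)^γ is integrable (with the convention log 0 = 0) and ∫_X (|f|^p·|log|f||)^γ dμ ≤ (e·p)^(−γ)·μ(X) + 2^γ·∫_X |f|^(p+1) dμ. -/
/-!
Bound `t = |f x|` pointwise, splitting at `t = 1`. For `t ≤ 1`, the bound `-s log s ≤ e⁻¹`
(the maximum, attained at `s = e⁻¹`) applied to `s = t ^ p` gives `t ^ p |log t| ≤ (e p)⁻¹`.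
For `t ≥ 1`, `log t ≤ 2 √t` gives `t ^ p |log t| ≤ 2 t ^ (p + 1/2)`, and `γ` is chosen so that
`(p + 1/2) γ = p + 1`. Integrating the bound over the finite measure space gives the estimate.
-/

open MeasureTheory Real

lemma mul_neg_log_le_inv_exp_one {s : ℝ} (hs : 0 ≤ s) : s * -log s ≤ (exp 1)⁻¹ := by
  rcases hs.eq_or_lt with rfl | hs
  · simp [(exp_pos 1).le]
  have hlog : -log s ≤ s⁻¹ * (exp 1)⁻¹ := by
    have := add_one_le_exp (-log s - 1)
    rwa [sub_add_cancel, exp_sub, exp_neg, exp_log hs, div_eq_mul_inv] at this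
  calc s * -log s ≤ s * (s⁻¹ * (exp 1)⁻¹) := mul_le_mul_of_nonneg_left hlog hs.le
    _ = (exp 1)⁻¹ := by field_simp

lemma rpow_mul_abs_log_le_of_le_one {p t : ℝ} (hp : 0 < p) (ht₀ : 0 ≤ t) (ht₁ : t ≤ 1) :
    t ^ p * |log t| ≤ (exp 1 * p)⁻¹ := by
  rcases ht₀.eq_or_lt with rfl | ht₀
  · rw [zero_rpow hp.ne', zero_mul]
    positivity
  have key : p * (t ^ p * |log t|) ≤ (exp 1)⁻¹ := by
    rw [abs_of_nonpos (log_nonpos ht₀.le ht₁)]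
    calc p * (t ^ p * -log t) = t ^ p * -log (t ^ p) := by rw [log_rpow ht₀]; ring
      _ ≤ (exp 1)⁻¹ := mul_neg_log_le_inv_exp_one (by positivity)
  rw [mul_inv, ← div_eq_mul_inv, le_div_iff₀ hp]
  linarith

lemma rpow_mul_abs_log_le_of_one_le {p t : ℝ} (ht : 1 ≤ t) :
    t ^ p * |log t| ≤ 2 * t ^ (p + 1 / 2) := by
  have ht₀ : 0 < t := by linarith
  have hlog : log t ≤ 2 * t ^ (1 / 2 : ℝ) := by
    have := log_le_rpow_div ht₀.le (by norm_num : (0 : ℝ) < 1 / 2)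
    linarith
  rw [abs_of_nonneg (log_nonneg ht), rpow_add ht₀]
  calc t ^ p * log t ≤ t ^ p * (2 * t ^ (1 / 2 : ℝ)) :=
        mul_le_mul_of_nonneg_left hlog (by positivity)
    _ = 2 * (t ^ p * t ^ (1 / 2 : ℝ)) := by ring

lemma rpow_mul_abs_log_rpow_le {p γ t : ℝ} (hp : 0 < p) (hγ : γ = (2 * p + 2) / (2 * p + 1))
    (ht : 0 ≤ t) :
    (t ^ p * |log t|) ^ γ ≤ (exp 1 * p) ^ (-γ) + 2 ^ γ * t ^ (p + 1) := by
  have hγ₀ : 0 < γ := by rw [hγ]; positivity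
  have hbase : 0 ≤ t ^ p * |log t| := by positivity
  rcases le_total t 1 with ht₁ | ht₁
  · calc (t ^ p * |log t|) ^ γ ≤ ((exp 1 * p)⁻¹) ^ γ :=
          rpow_le_rpow hbase (rpow_mul_abs_log_le_of_le_one hp ht ht₁) hγ₀.le
      _ = (exp 1 * p) ^ (-γ) := by rw [inv_rpow (by positivity), rpow_neg (by positivity)]
      _ ≤ _ := le_add_of_nonneg_right (by positivity)
  · have hexp : (p + 1 / 2) * γ = p + 1 := by
      rw [hγ]
      field_simp
    calc (t ^ p * |log t|) ^ γ ≤ (2 * t ^ (p + 1 / 2)) ^ γ :=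
          rpow_le_rpow hbase (rpow_mul_abs_log_le_of_one_le ht₁) hγ₀.le
      _ = 2 ^ γ * t ^ (p + 1) := by
          rw [mul_rpow (by norm_num) (by positivity), ← rpow_mul ht, hexp]
      _ ≤ _ := le_add_of_nonneg_left (by positivity)

/-- If `μ` is a finite measure, `p > 1`, `γ = (2p+2)/(2p+1)` and `|f|^(p+1)` is
integrable, then `(|f|^p |log |f||)^γ` is integrable and
`∫ (|f|^p |log |f||)^γ ≤ (e p)^(−γ) μ(X) + 2^γ ∫ |f|^(p+1)`. -/
theorem stmt_7 {X : Type*} [MeasurableSpace X] (μ : Measure X) [IsFiniteMeasure μ]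
    (p γ : ℝ) (hp : 1 < p) (hγ : γ = (2 * p + 2) / (2 * p + 1))
    (f : X → ℝ) (hf : Measurable f)
    (hint : Integrable (fun x => |f x| ^ (p + 1)) μ) :
    Integrable (fun x => (|f x| ^ p * |Real.log (abs (f x))|) ^ γ) μ ∧
      ∫ x, (|f x| ^ p * |Real.log (abs (f x))|) ^ γ ∂μ ≤
        (Real.exp 1 * p) ^ (-γ) * (μ Set.univ).toReal
          + 2 ^ γ * ∫ x, |f x| ^ (p + 1) ∂μ := by
  have hbound (x : X) : (|f x| ^ p * |log (|f x|)|) ^ γ ≤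
      (exp 1 * p) ^ (-γ) + 2 ^ γ * |f x| ^ (p + 1) :=
    rpow_mul_abs_log_rpow_le (by linarith) hγ (abs_nonneg _)
  have hmajorant : Integrable (fun x => (exp 1 * p) ^ (-γ) + 2 ^ γ * |f x| ^ (p + 1)) μ :=
    (integrable_const _).add (hint.const_mul _)
  have hintegrable : Integrable (fun x => (|f x| ^ p * |log (|f x|)|) ^ γ) μ := by
    have hmeas : Measurable fun x => (|f x| ^ p * |log (|f x|)|) ^ γ := by fun_prop
    refine hmajorant.mono' hmeas.aestronglyMeasurable (.of_forall fun x => ?_)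
    rw [norm_of_nonneg (by positivity)]
    exact hbound x
  refine ⟨hintegrable, (integral_mono hintegrable hmajorant hbound).trans_eq ?_⟩
  rw [integral_add (integrable_const _) (hint.const_mul _), integral_const, smul_eq_mul,
    integral_const_mul, mul_comm, measureReal_def]
end

section
/- Let p > 1, S > 0 and 0 < δ < (p+1)/2 be reals, and set r(δ) = (δ/S^(p+2))^(1/p). Let a > 0, B ∈ ℝ, and C ≥ 0 satisfy B ≤ S^(p+2)·a^(p+2) and δ·a² = B. Then a²/2 − B/(p+1) + C/(p+1)² ≥ (1/2 − δ/(p+1))·r(δ)², and (1/2 − δ/(p+1))·r(δ)² > 0. -/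
/-!
On the Nehari manifold `δ a² = B`, the Sobolev bound `B ≤ S^(p+2) a^(p+2)` forces
`δ ≤ S^(p+2) a^p`, i.e. `a ≥ r(δ)`. There the energy equals
`(1/2 − δ/(p+1)) a² + C/(p+1)²`, and the coefficient of `a²` is positive for `δ < (p+1)/2`,
so the energy is at least `(1/2 − δ/(p+1)) r(δ)²`.
-/

open Real

theorem div_le_rpow_of_mul_sq_le_mul_rpow_add_two {p K δ a : ℝ} (hK : 0 < K) (ha : 0 < a)
    (h : δ * a ^ 2 ≤ K * a ^ (p + 2)) : δ / K ≤ a ^ p := by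
  have hsplit : a ^ (p + 2) = a ^ p * a ^ 2 := by
    exact_mod_cast rpow_add_natCast ha.ne' p 2
  rw [hsplit, ← mul_assoc] at h
  rw [div_le_iff₀ hK, mul_comm]
  exact le_of_mul_le_mul_right h (pow_pos ha 2)

theorem rpow_one_div_le_of_mul_sq_le_mul_rpow_add_two {p K δ a : ℝ} (hp : 0 < p) (hK : 0 < K)
    (hδ : 0 ≤ δ) (ha : 0 < a) (h : δ * a ^ 2 ≤ K * a ^ (p + 2)) : (δ / K) ^ (1 / p) ≤ a := by
  rw [one_div, rpow_inv_le_iff_of_pos (div_nonneg hδ hK.le) ha.le hp]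
  exact div_le_rpow_of_mul_sq_le_mul_rpow_add_two hK ha h

/-- Scalar lower bound for the depth of the family of potential wells: if
`0 < δ < (p+1)/2`, `r(δ) = (δ/S^(p+2))^(1/p)`, `a > 0`, `B ≤ S^(p+2) a^(p+2)`,
`C ≥ 0` and `δ a² = B`, then
`a²/2 − B/(p+1) + C/(p+1)² ≥ (1/2 − δ/(p+1)) r(δ)²` and `(1/2 − δ/(p+1)) r(δ)² > 0`. -/
theorem stmt_9 (p S δ : ℝ) (hp : 1 < p) (hS : 0 < S) (hδ0 : 0 < δ)
    (hδ1 : δ < (p + 1) / 2)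
    (r : ℝ) (hr : r = (δ / S ^ (p + 2)) ^ (1 / p))
    (a B C : ℝ) (ha : 0 < a) (hC : 0 ≤ C)
    (hB : B ≤ S ^ (p + 2) * a ^ (p + 2)) (hN : δ * a ^ 2 = B) :
    (1 / 2 - δ / (p + 1)) * r ^ 2 ≤ a ^ 2 / 2 - B / (p + 1) + C / (p + 1) ^ 2 ∧
      0 < (1 / 2 - δ / (p + 1)) * r ^ 2 := by
  have hp1 : 0 < p + 1 := by linarith
  have hcoef : 0 < 1 / 2 - δ / (p + 1) := by
    rw [sub_pos, div_lt_div_iff₀ hp1 two_pos]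
    linarith
  have hr0 : 0 < r := hr ▸ rpow_pos_of_pos (div_pos hδ0 (rpow_pos_of_pos hS _)) _
  have hra : r ≤ a := hr ▸ rpow_one_div_le_of_mul_sq_le_mul_rpow_add_two (by linarith)
    (rpow_pos_of_pos hS _) hδ0.le ha (hN ▸ hB)
  refine ⟨?_, by positivity⟩
  have hCp : 0 ≤ C / (p + 1) ^ 2 := by positivity
  calc (1 / 2 - δ / (p + 1)) * r ^ 2
      ≤ (1 / 2 - δ / (p + 1)) * a ^ 2 := by gcongr
    _ = a ^ 2 / 2 - δ * a ^ 2 / (p + 1) := by ring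
    _ ≤ a ^ 2 / 2 - B / (p + 1) + C / (p + 1) ^ 2 := by rw [hN]; linarith
end

section
/- Let α > 0 and t₀ ∈ ℝ. There is no function N : [t₀, ∞) → ℝ that is twice differentiable on [t₀, ∞) and satisfies: N(t) > 0 for all t ≥ t₀, N′(t₀) > 0, and N(t)·N″(t) − (1+α)·N′(t)² ≥ 0 for all t ≥ t₀. Equivalently, any such N must cease to exist (blow up) in finite time. -/
/-!
Levine's concavity argument. The differential inequality says precisely that
`N' N^{-(1+α)} = -(N^{-α})' / α` is nondecreasing, so `N^{-α}` decreases at least linearly,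
with slope `-α N'(t₀) N(t₀)^{-(1+α)} < 0`; it would therefore become nonpositive in finite time,
contradicting `N > 0`.
-/

open Set

theorem Convex.monotoneOn_of_hasDerivWithinAt_nonneg {D : Set ℝ} (hD : Convex ℝ D)
    {f f' : ℝ → ℝ} (hf : ∀ x ∈ D, HasDerivWithinAt f (f' x) D x) (hf' : ∀ x ∈ D, 0 ≤ f' x) :
    MonotoneOn f D :=
  _root_.monotoneOn_of_hasDerivWithinAt_nonneg hD (fun x hx ↦ (hf x hx).continuousWithinAt)
    (fun x hx ↦ (hf x (interior_subset hx)).mono interior_subset)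
    (fun x hx ↦ hf' x (interior_subset hx))

theorem exists_nonpos_of_hasDerivWithinAt_le_neg {f f' : ℝ → ℝ} {a k : ℝ} (hk : 0 < k)
    (hf : ∀ t ∈ Ici a, HasDerivWithinAt f (f' t) (Ici a) t) (hf' : ∀ t ∈ Ici a, f' t ≤ -k) :
    ∃ t ≥ a, f t ≤ 0 := by
  have hmono : MonotoneOn (fun t ↦ -(f t + k * t)) (Ici a) :=
    (convex_Ici a).monotoneOn_of_hasDerivWithinAt_nonneg
      (fun t ht ↦ ((hf t ht).add ((hasDerivWithinAt_id t _).const_mul k)).neg)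
      (fun t ht ↦ by linarith [hf' t ht])
  set t := a + |f a| / k
  have hat : a ≤ t := le_add_of_nonneg_right (by positivity)
  refine ⟨t, hat, ?_⟩
  have h := hmono self_mem_Ici hat hat
  have hkt : k * t = k * a + |f a| := by
    simp only [t]; field_simp
  simp only at h
  linarith [le_abs_self (f a)]

theorem HasDerivWithinAt.mul_rpow_neg {f f' : ℝ → ℝ} {n'' β t : ℝ} {s : Set ℝ}
    (hf : HasDerivWithinAt f (f' t) s t) (hf' : HasDerivWithinAt f' n'' s t) (hpos : 0 < f t) :
    HasDerivWithinAt (fun t ↦ f' t * f t ^ (-β))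
      ((f t * n'' - β * f' t ^ 2) * f t ^ (-β - 1)) s t := by
  refine (hf'.mul (hf.rpow_const (p := -β) (Or.inl hpos.ne'))).congr_deriv ?_
  rw [Real.rpow_sub_one hpos.ne']
  field_simp
  ring

theorem HasDerivWithinAt.rpow_neg {f f' : ℝ → ℝ} {α t : ℝ} {s : Set ℝ}
    (hf : HasDerivWithinAt f (f' t) s t) (hpos : 0 < f t) :
    HasDerivWithinAt (fun t ↦ f t ^ (-α)) (-α * (f' t * f t ^ (-(1 + α)))) s t := by
  refine (hf.rpow_const (p := -α) (Or.inl hpos.ne')).congr_deriv ?_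
  rw [show -α - 1 = -(1 + α) by ring]
  ring

/-- Concavity (Levine-type) blow-up lemma: for `α > 0` there is no function
`N : [t₀,∞) → ℝ`, twice differentiable on `[t₀,∞)`, with `N > 0` on `[t₀,∞)`,
`N′(t₀) > 0` and `N N″ − (1+α) N′² ≥ 0` on `[t₀,∞)`. -/
theorem stmt_12 (α t₀ : ℝ) (hα : 0 < α) :
    ¬ ∃ (N N' N'' : ℝ → ℝ),
        (∀ t, t₀ ≤ t → HasDerivWithinAt N (N' t) (Set.Ici t₀) t) ∧
        (∀ t, t₀ ≤ t → HasDerivWithinAt N' (N'' t) (Set.Ici t₀) t) ∧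
        (∀ t, t₀ ≤ t → 0 < N t) ∧
        0 < N' t₀ ∧
        (∀ t, t₀ ≤ t → 0 ≤ N t * N'' t - (1 + α) * N' t ^ 2) := by
  rintro ⟨N, N', N'', hN, hN', hpos, hN'₀, hineq⟩
  set G := fun t ↦ N' t * N t ^ (-(1 + α))
  have hG_mono : MonotoneOn G (Ici t₀) :=
    (convex_Ici t₀).monotoneOn_of_hasDerivWithinAt_nonneg
      (fun t ht ↦ (hN t ht).mul_rpow_neg (hN' t ht) (hpos t ht))
      (fun t ht ↦ mul_nonneg (hineq t ht) (Real.rpow_pos_of_pos (hpos t ht) _).le)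
  have hG₀ : 0 < G t₀ := mul_pos hN'₀ (Real.rpow_pos_of_pos (hpos t₀ le_rfl) _)
  obtain ⟨t, ht, hNt⟩ := exists_nonpos_of_hasDerivWithinAt_le_neg (mul_pos hα hG₀)
    (fun t ht ↦ (hN t ht).rpow_neg (α := α) (hpos t ht))
    (fun t ht ↦ by nlinarith [hG_mono self_mem_Ici ht ht])
  exact hNt.not_gt (Real.rpow_pos_of_pos (hpos t ht) _)
end
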